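/- Let λ_c > 0, α ∈ [0, λ_c] (where λ_c is the top eigenvalue of a unit-trace PSD matrix, so λ_c ≤ 1). Define Δ_c(N) = −log((N² λ_c² + 2N λ_c α + 1)/(N+1)²) + log(λ_c²). Then N·Δ_c(N) → 2 − 2α/λ_c as N → ∞. -/

import Mathlib

/-!
Writing `N ↦ N²λ² + 2Nλα + 1` as `N²λ² (1 + uₙ)` with `uₙ = (2Nλα + 1)/(N²λ²)`, the scaled
novelty is `2 N log (1 + 1/N) - N log (1 + uₙ)`. Since `log (1 + u) = u · dslope log 1 (1 + u)`
and that slope tends to `log' 1 = 1`, `N log (1 + uₙ)` has the same limit as `N uₙ`, namely `1`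
for `uₙ = 1/N` and `2α/λ` for the second term.
-/

open Filter Topology Real

theorem tendsto_mul_log_one_add {ι : Type*} {l : Filter ι} {c u : ι → ℝ} {L : ℝ}
    (hu : Tendsto u l (𝓝 0)) (h : Tendsto (fun i => c i * u i) l (𝓝 L)) :
    Tendsto (fun i => c i * log (1 + u i)) l (𝓝 L) := by
  have hslope : Tendsto (fun i => dslope log 1 (1 + u i)) l (𝓝 1) := by
    have hcont : ContinuousAt (dslope log 1) 1 :=
      continuousAt_dslope_same.2 (differentiableAt_log one_ne_zero)
    have h1u : Tendsto (fun i => 1 + u i) l (𝓝 1) := by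
      simpa using tendsto_const_nhds.add hu
    have hlim := hcont.tendsto
    rw [dslope_same, Real.deriv_log, inv_one] at hlim
    exact hlim.comp h1u
  refine (mul_one L ▸ h.mul hslope).congr fun i => ?_
  have hlog := sub_smul_dslope log 1 (1 + u i)
  rw [add_sub_cancel_left, log_one, sub_zero, smul_eq_mul] at hlog
  rw [mul_assoc, hlog]

theorem tendsto_nat_mul_log_one_add {u : ℕ → ℝ} {L : ℝ}
    (h : Tendsto (fun n : ℕ => (n : ℝ) * u n) atTop (𝓝 L)) :
    Tendsto (fun n : ℕ => (n : ℝ) * log (1 + u n)) atTop (𝓝 L) := by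
  refine tendsto_mul_log_one_add ?_ h
  refine (h.div_atTop tendsto_natCast_atTop_atTop).congr' ?_
  filter_upwards [eventually_ne_atTop 0] with n hn
  field_simp

theorem neg_log_div_add_log_sq_eq {x lam α : ℝ} (hx : 0 < x) (hlam : 0 < lam) (hα : 0 ≤ α) :
    -log ((x ^ 2 * lam ^ 2 + 2 * x * lam * α + 1) / (x + 1) ^ 2) + log (lam ^ 2) =
      2 * log (1 + 1 / x) - log (1 + (2 * x * lam * α + 1) / (x ^ 2 * lam ^ 2)) := by
  have hf : 0 < x ^ 2 * lam ^ 2 + 2 * x * lam * α + 1 := by positivity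
  have e1 : 1 + 1 / x = (x + 1) / x := by field_simp
  have e2 : 1 + (2 * x * lam * α + 1) / (x ^ 2 * lam ^ 2) =
      (x ^ 2 * lam ^ 2 + 2 * x * lam * α + 1) / (x ^ 2 * lam ^ 2) := by field_simp; ring
  rw [e1, e2, log_div hf.ne' (by positivity), log_div (by positivity) hx.ne',
    log_div hf.ne' (by positivity), log_mul (by positivity) (by positivity), log_pow, log_pow,
    log_pow]
  push_cast
  ring

theorem class_novelty_asymptotic_scaling_general
    (lamc α : ℝ) (hlam : 0 < lamc)
    (hα0 : 0 ≤ α) :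
    Tendsto
      (fun N : ℕ =>
        (N : ℝ) *
          (-Real.log (((N : ℝ) ^ 2 * lamc ^ 2 + 2 * (N : ℝ) * lamc * α + 1)
              / ((N : ℝ) + 1) ^ 2) + Real.log (lamc ^ 2)))
      atTop (nhds (2 - 2 * α / lamc)) := by
  have hrecip : Tendsto (fun n : ℕ => (n : ℝ) * log (1 + 1 / n)) atTop (𝓝 1) := by
    refine tendsto_nat_mul_log_one_add (tendsto_const_nhds.congr' ?_)
    filter_upwards [eventually_ne_atTop 0] with n hn
    field_simp
  have hcross : Tendsto (fun n : ℕ => (n : ℝ) *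
      log (1 + (2 * n * lamc * α + 1) / (n ^ 2 * lamc ^ 2))) atTop (𝓝 (2 * α / lamc)) := by
    refine tendsto_nat_mul_log_one_add ?_
    have hlim : Tendsto (fun n : ℕ => 2 * α / lamc + 1 / (n : ℝ) / lamc ^ 2) atTop
        (𝓝 (2 * α / lamc)) := by
      simpa using tendsto_const_nhds.add (tendsto_one_div_atTop_nhds_zero_nat.div_const (lamc ^ 2))
    refine hlim.congr' ?_
    filter_upwards [eventually_ne_atTop 0] with n hn
    field_simp
  have hlim := (hrecip.const_mul 2).sub hcross
  rw [mul_one] at hlim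
  refine hlim.congr' ?_
  filter_upwards [eventually_gt_atTop 0] with n hn
  rw [neg_log_div_add_log_sq_eq (Nat.cast_pos.2 hn) hlam hα0]
  ring

/-- For λ_c > 0 and α ∈ [0, λ_c] with λ_c ≤ 1, the scaled class-conditional
novelty N·Δ_c(N) tends to 2 − 2α/λ_c as N → ∞, where
Δ_c(N) = −log((N²λ_c² + 2Nλ_cα + 1)/(N+1)²) + log(λ_c²). -/
theorem class_novelty_asymptotic_scaling
    (lamc α : ℝ) (hlam : 0 < lamc) (hlam1 : lamc ≤ 1)
    (hα0 : 0 ≤ α) (hαlam : α ≤ lamc) :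
    Tendsto
      (fun N : ℕ =>
        (N : ℝ) *
          (-Real.log (((N : ℝ) ^ 2 * lamc ^ 2 + 2 * (N : ℝ) * lamc * α + 1)
              / ((N : ℝ) + 1) ^ 2) + Real.log (lamc ^ 2)))
      atTop (nhds (2 - 2 * α / lamc)) :=
  class_novelty_asymptotic_scaling_general lamc α hlam hα0
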